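/- Let γ̂, λ > 0, β > 0, a > 0, ε ∈ ℝ, T > 0, and let B̃ : [0, T] → ℝ be continuous and bounded. Define Φ(B̃)(t) = a − ∫ₜᵀ ( ε β B̃(s) − E^{B̃}(s) C^{B̃}(s) ) ds. Then ‖Φ(B̃)‖_∞ ≤ a + |ε| β T ‖B̃‖_∞ + (|ε| γ̂ β / (2λ)) T³ ‖B̃‖_∞³. Moreover, if R = (3/2)a, |ε| satisfies a + |ε| β R T + |ε| β γ̂ R³ T³ / (2λ) ≤ R, and ‖B̃‖_∞ ≤ R, then ‖Φ(B̃)‖_∞ ≤ R. -/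

import Mathlib

/-! The Riccati solution `F` is nonpositive: with the integrating factor `exp (∫_T^t F)`, the
product `F(t) exp (∫_T^t F)` has derivative `(γ̂/λ) B̃(t)² exp (∫_T^t F) ≥ 0` and vanishes at `T`.
Hence the weights `exp (∫ₜˢ F)` in `E` and `C` lie in `(0, 1]`, so `|E| ≤ (γ̂β/λ)‖B̃‖_∞ T` and
`|C| ≤ (|ε|/2)‖B̃‖_∞² T`, and integrating `|εβB̃ − EC|` over `[t, T]` bounds `Φ`. The bound is
monotone in `‖B̃‖_∞`, which gives the second claim. -/

open Set

/-- The supremum norm of `f` on the interval `[0, T]`. -/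
noncomputable def supNorm (T : ℝ) (f : ℝ → ℝ) : ℝ :=
  sSup ((fun t => |f t|) '' Icc 0 T)

open Real intervalIntegral

section SupNorm

variable {T : ℝ} {f : ℝ → ℝ}

lemma supNorm_nonneg : 0 ≤ supNorm T f :=
  Real.sSup_nonneg (by rintro _ ⟨t, -, rfl⟩; exact abs_nonneg _)

lemma abs_le_supNorm (hf : ContinuousOn f (Icc 0 T)) {t : ℝ} (ht : t ∈ Icc 0 T) :
    |f t| ≤ supNorm T f :=
  le_csSup (isCompact_Icc.bddAbove_image hf.abs) ⟨t, ht, rfl⟩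

lemma supNorm_le {K : ℝ} (hK : 0 ≤ K) (h : ∀ t ∈ Icc 0 T, |f t| ≤ K) : supNorm T f ≤ K :=
  Real.sSup_le (by rintro _ ⟨t, ht, rfl⟩; exact h t ht) hK

lemma supNorm_sub_integral_le {a K : ℝ} {g : ℝ → ℝ} (ha : 0 ≤ a) (hK : 0 ≤ K) (hT : 0 ≤ T)
    (hg : ∀ s ∈ Icc 0 T, |g s| ≤ K) :
    supNorm T (fun t => a - ∫ s in t..T, g s) ≤ a + K * T := by
  refine supNorm_le (by positivity) fun t ht => ?_
  have hint : ‖∫ s in t..T, g s‖ ≤ K * |T - t| :=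
    norm_integral_le_of_norm_le_const fun s hs => by
      rw [uIoc_of_le ht.2] at hs
      exact hg s ⟨ht.1.trans hs.1.le, hs.2⟩
  rw [Real.norm_eq_abs, abs_of_nonneg (sub_nonneg.2 ht.2)] at hint
  calc |a - ∫ s in t..T, g s| ≤ |a| + |∫ s in t..T, g s| := abs_sub _ _
    _ ≤ a + K * T := by rw [abs_of_nonneg ha]; nlinarith [ht.1]

end SupNorm

lemma hasDerivAt_integral_of_continuousOn {f : ℝ → ℝ} {a b c t : ℝ}
    (hf : ContinuousOn f (Icc a b)) (hc : c ∈ Icc a b) (ht : t ∈ Ioo a b) :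
    HasDerivAt (fun x => ∫ s in c..x, f s) (f t) t :=
  integral_hasDerivAt_right
    (hf.mono (uIcc_subset_Icc hc (Ioo_subset_Icc_self ht))).intervalIntegrable
    ((hf.mono Ioo_subset_Icc_self).stronglyMeasurableAtFilter isOpen_Ioo t ht)
    (hf.continuousAt (Icc_mem_nhds ht.1 ht.2))

theorem nonpos_of_riccati {q F : ℝ → ℝ} {a b : ℝ} (hq : ContinuousOn q (Icc a b))
    (hq₀ : ∀ t ∈ Icc a b, 0 ≤ q t) (hF : ContinuousOn F (Icc a b))
    (hsol : ∀ t ∈ Icc a b, F t = -∫ s in t..b, (q s - F s ^ 2)) :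
    ∀ t ∈ Icc a b, F t ≤ 0 := by
  intro t ht
  have hb : b ∈ Icc a b := right_mem_Icc.2 (ht.1.trans ht.2)
  have hint : ∀ x ∈ Icc a b, F x = ∫ s in b..x, (q s - F s ^ 2) := fun x hx => by
    rw [hsol x hx, integral_symm, neg_neg]
  set P := fun x => ∫ s in b..x, F s
  have hmono : MonotoneOn (fun x => F x * exp (P x)) (Icc a b) := by
    refine monotoneOn_of_hasDerivWithinAt_nonneg (f' := fun x => q x * exp (P x)) (convex_Icc a b)
      ?_ (fun x hx => ?_) (fun x hx => ?_)
    · refine hF.mul (continuous_exp.comp_continuousOn ?_)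
      have hab := ht.1.trans ht.2
      simpa only [uIcc_of_le hab] using continuousOn_primitive_interval'
        (hF.mono (uIcc_of_le hab).subset).intervalIntegrable (uIcc_of_le hab ▸ hb)
    · rw [interior_Icc] at hx
      have hF' : HasDerivAt F (q x - F x ^ 2) x :=
        (hasDerivAt_integral_of_continuousOn (hq.sub (hF.pow 2)) hb hx).congr_of_eventuallyEq
          (Filter.eventually_of_mem (Icc_mem_nhds hx.1 hx.2) hint)
      have hP : HasDerivAt P (F x) x := hasDerivAt_integral_of_continuousOn hF hb hx
      refine ((hF'.mul hP.exp).congr_deriv ?_).hasDerivWithinAt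
      ring
    · exact mul_nonneg (hq₀ x (interior_subset hx)) (exp_pos _).le
  have := hmono ht hb ht.2
  simp only [P, integral_same, exp_zero, mul_one, hsol b hb, neg_zero] at this
  exact nonpos_of_mul_nonpos_left this (exp_pos _)

lemma abs_mul_integral_mul_exp_integral_le {F h : ℝ → ℝ} {c t T K : ℝ} (ht : t ∈ Icc 0 T)
    (hF : ∀ r ∈ Icc 0 T, F r ≤ 0) (hh : ∀ s ∈ Icc 0 T, |h s| ≤ K) :
    |c * ∫ s in t..T, h s * exp (∫ r in t..s, F r)| ≤ |c| * K * T := by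
  have hint : ‖∫ s in t..T, h s * exp (∫ r in t..s, F r)‖ ≤ K * |T - t| :=
    norm_integral_le_of_norm_le_const fun s hs => by
      rw [uIoc_of_le ht.2] at hs
      have hexp : exp (∫ r in t..s, F r) ≤ 1 := by
        rw [exp_le_one_iff, ← neg_nonneg, ← integral_neg]
        exact integral_nonneg hs.1.le fun r hr =>
          neg_nonneg.2 (hF r ⟨ht.1.trans hr.1, hr.2.trans hs.2⟩)
      rw [Real.norm_eq_abs, abs_mul, abs_exp]
      exact (mul_le_of_le_one_right (abs_nonneg _) hexp).trans (hh s ⟨ht.1.trans hs.1.le, hs.2⟩)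
  have hK : 0 ≤ K := (abs_nonneg _).trans (hh t ht)
  rw [Real.norm_eq_abs, abs_of_nonneg (sub_nonneg.2 ht.2)] at hint
  rw [abs_mul, mul_assoc]
  exact mul_le_mul_of_nonneg_left (hint.trans (by nlinarith [ht.1])) (abs_nonneg c)

/-- A priori estimate for the Picard map `Φ(B̃)(t) = a − ∫ₜᵀ (εβ B̃(s) − E^{B̃}(s)C^{B̃}(s)) ds`:
`‖Φ(B̃)‖_∞ ≤ a + |ε|βT‖B̃‖_∞ + (|ε|γ̂β/(2λ))T³‖B̃‖_∞³`; moreover, if `R = (3/2)a`,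
`a + |ε|βRT + |ε|βγ̂R³T³/(2λ) ≤ R`, and `‖B̃‖_∞ ≤ R`, then `‖Φ(B̃)‖_∞ ≤ R`. -/
theorem Phi_a_priori_bound
    (γhat lam β a ε T : ℝ)
    (hγ : 0 < γhat) (hlam : 0 < lam) (hβ : 0 < β) (ha : 0 < a) (hT : 0 < T)
    (Btil : ℝ → ℝ) (hB : ContinuousOn Btil (Icc 0 T))
    (F : ℝ → ℝ) (hFcont : ContinuousOn F (Icc 0 T))
    (hFsol : ∀ t ∈ Icc (0:ℝ) T, F t = -∫ s in t..T, (γhat / lam * Btil s ^ 2 - F s ^ 2))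
    (E C Phi : ℝ → ℝ)
    (hE : E = fun t => -(γhat * β / lam) * ∫ s in t..T, Btil s * Real.exp (∫ r in t..s, F r))
    (hC : C = fun t => -(ε / 2) * ∫ s in t..T, Btil s ^ 2 * Real.exp (∫ r in t..s, F r))
    (hPhi : Phi = fun t => a - ∫ s in t..T, (ε * β * Btil s - E s * C s)) :
    supNorm T Phi ≤
      a + |ε| * β * T * supNorm T Btil +
        |ε| * γhat * β / (2 * lam) * T ^ 3 * supNorm T Btil ^ 3 ∧
    (∀ R : ℝ, R = 3 / 2 * a →
      a + |ε| * β * R * T + |ε| * β * γhat * R ^ 3 * T ^ 3 / (2 * lam) ≤ R →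
      supNorm T Btil ≤ R → supNorm T Phi ≤ R) := by
  set M := supNorm T Btil
  have hM : 0 ≤ M := supNorm_nonneg
  have hBM : ∀ s ∈ Icc 0 T, |Btil s| ≤ M := fun s hs => abs_le_supNorm hB hs
  have hFnonpos : ∀ t ∈ Icc 0 T, F t ≤ 0 :=
    nonpos_of_riccati (q := fun s => γhat / lam * Btil s ^ 2) (continuousOn_const.mul (hB.pow 2))
      (fun t _ => by positivity) hFcont hFsol
  have hE_le : ∀ t ∈ Icc 0 T, |E t| ≤ γhat * β / lam * M * T := fun t ht => by
    have h := abs_mul_integral_mul_exp_integral_le (c := -(γhat * β / lam)) ht hFnonpos hBM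
    rw [abs_neg, abs_of_pos (by positivity : 0 < γhat * β / lam)] at h
    rw [hE]; exact h
  have hC_le : ∀ t ∈ Icc 0 T, |C t| ≤ |ε| / 2 * M ^ 2 * T := fun t ht => by
    have hBM2 : ∀ s ∈ Icc 0 T, |Btil s ^ 2| ≤ M ^ 2 := fun s hs => by
      simpa only [abs_pow] using pow_le_pow_left₀ (abs_nonneg _) (hBM s hs) 2
    have h := abs_mul_integral_mul_exp_integral_le (c := -(ε / 2)) ht hFnonpos hBM2
    rw [abs_neg, abs_div, abs_two] at h
    rw [hC]; exact h
  have hPhi_le : supNorm T Phi ≤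
      a + |ε| * β * T * M + |ε| * γhat * β / (2 * lam) * T ^ 3 * M ^ 3 := by
    have hintegrand : ∀ s ∈ Icc 0 T, |ε * β * Btil s - E s * C s| ≤
        |ε| * β * M + γhat * β / lam * M * T * (|ε| / 2 * M ^ 2 * T) := fun s hs => by
      calc _ ≤ |ε * β * Btil s| + |E s * C s| := abs_sub _ _
        _ = |ε| * β * |Btil s| + |E s| * |C s| := by rw [abs_mul, abs_mul, abs_mul, abs_of_pos hβ]
        _ ≤ _ := by gcongr; exacts [hBM s hs, hE_le s hs, hC_le s hs]
    calc supNorm T Phi ≤ a + (|ε| * β * M + γhat * β / lam * M * T * (|ε| / 2 * M ^ 2 * T)) * T :=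
          hPhi ▸ supNorm_sub_integral_le ha.le (by positivity) hT.le hintegrand
      _ = _ := by field_simp; ring
  refine ⟨hPhi_le, fun R _ hR hMR => hPhi_le.trans (le_trans ?_ hR)⟩
  have : M ^ 3 ≤ R ^ 3 := pow_le_pow_left₀ hM hMR 3
  calc _ = a + |ε| * β * M * T + |ε| * β * γhat * M ^ 3 * T ^ 3 / (2 * lam) := by ring
    _ ≤ _ := by gcongr
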